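/- Let H : E → E and h, p, r > 0 be such that ‖Hw − Hv‖ ≤ h‖w − v‖ for all w, v ∈ E_r^+, and Hv + pv ≤ Hw + pw whenever v ≤ w with v, w ∈ E_r^+. Fix T > 0 and define, for u ∈ Y_T, (F_r u)(x,t) := ∂u/∂t(x,t) − H(0 ∨ u ∧ r)(x,t). Suppose u₁, u₂ ∈ Y_T satisfy 0 ≤ u₁(x,t) ≤ r and 0 ≤ u₂(x,t) ≤ r for all (x,t) ∈ ℝ^d × (0,T], (F_r u₁)(x,t) ≤ (F_r u₂)(x,t) for all (x,t) ∈ ℝ^d × (0,T], and u₁(x,0) ≤ u₂(x,0) for all x ∈ ℝ^d. Then u₁(x,t) ≤ u₂(x,t) for all (x,t) ∈ ℝ^d × [0,T]. -/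

import Mathlib

open MeasureTheory Filter Topology
open scoped RealInnerProductSpace

noncomputable section

/-- Euclidean space `ℝ^d`. -/
abbrev EucSp (d : ℕ) := EuclideanSpace ℝ (Fin d)

/-- The Banach space `E = C_b(ℝ^d)` of bounded continuous functions with sup-norm. -/
abbrev BCF (d : ℕ) := BoundedContinuousFunction (EucSp d) ℝ

variable {d : ℕ}

/-- Convolution `(a ∗ v)(x) = ∫ a(x − y) v(y) dy`. -/
def convol (a v : EucSp d → ℝ) (x : EucSp d) : ℝ := ∫ y, a (x - y) * v y

/-- Membership in the tube `E_r^+ = {v ∈ E : 0 ≤ v ≤ r}`. -/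
def memTube (r : ℝ) (v : BCF d) : Prop := ∀ x, 0 ≤ v x ∧ v x ≤ r

/-- `u` is a classical solution of `∂ₜ u = κ a∗u − m u − u · Gu` on `[0, T]`:
`u ∈ C([0,T] → E) ∩ C¹((0,T] → E)` and the equation holds on `(0,T]`. -/
def IsSolOn (a : EucSp d → ℝ) (κ m : ℝ) (G : BCF d → BCF d) (T : ℝ)
    (u : ℝ → BCF d) : Prop :=
  ContinuousOn u (Set.Icc 0 T) ∧
    ∃ u' : ℝ → BCF d, ContinuousOn u' (Set.Ioc 0 T) ∧
      ∀ t ∈ Set.Ioc (0 : ℝ) T,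
        HasDerivWithinAt u (u' t) (Set.Ioc 0 T) t ∧
          ∀ x, u' t x = κ * convol a (⇑(u t)) x - m * u t x - u t x * G (u t) x

/-- `u` is a classical solution of `∂ₜ u = κ a∗u − m u − u · Gu` on `[0, ∞)`. -/
def IsSolGlobal (a : EucSp d → ℝ) (κ m : ℝ) (G : BCF d → BCF d)
    (u : ℝ → BCF d) : Prop :=
  ContinuousOn u (Set.Ici 0) ∧
    ∃ u' : ℝ → BCF d, ContinuousOn u' (Set.Ioi 0) ∧
      ∀ t ∈ Set.Ioi (0 : ℝ),
        HasDerivWithinAt u (u' t) (Set.Ioi 0) t ∧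
          ∀ x, u' t x = κ * convol a (⇑(u t)) x - m * u t x - u t x * G (u t) x

/-- `u` is a classical solution of the generalized equation
`∂ₜ u = Au − m u − u · Gu` on `[0, T]`. -/
def IsSolOnGen (A G : BCF d → BCF d) (m T : ℝ) (u : ℝ → BCF d) : Prop :=
  ContinuousOn u (Set.Icc 0 T) ∧
    ∃ u' : ℝ → BCF d, ContinuousOn u' (Set.Ioc 0 T) ∧
      ∀ t ∈ Set.Ioc (0 : ℝ) T,
        HasDerivWithinAt u (u' t) (Set.Ioc 0 T) t ∧
          ∀ x, u' t x = A (u t) x - m * u t x - u t x * G (u t) x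

/-- Membership in `Y_T = C([0,T] → E) ∩ C¹((0,T] → E)`, with derivative `u'`. -/
def MemY (T : ℝ) (u u' : ℝ → BCF d) : Prop :=
  ContinuousOn u (Set.Icc 0 T) ∧ ContinuousOn u' (Set.Ioc 0 T) ∧
    ∀ t ∈ Set.Ioc (0 : ℝ) T, HasDerivWithinAt u (u' t) (Set.Ioc 0 T) t

/-- The truncation `0 ∨ u ∧ r` of `u ∈ E`. -/
def truncate (u : BCF d) (r : ℝ) : BCF d :=
  BoundedContinuousFunction.ofNormedAddCommGroup
    (fun x => max 0 (min (u x) r))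
    (continuous_const.max (u.continuous.min continuous_const)) |r|
    (fun x => by
      rw [Real.norm_eq_abs, abs_of_nonneg (le_max_left 0 _)]
      exact max_le (abs_nonneg r) ((min_le_right _ _).trans (le_abs_self r)))

/-- The translation operator `(T_y v)(x) = v(x − y)` on `E`. -/
def translateBCF (v : BCF d) (y : EucSp d) : BCF d :=
  v.compContinuous ⟨fun x => x - y, by continuity⟩

/-- (A1): `m > 0` and `β := κ − m > 0`. -/
def assumA1 (κ m : ℝ) : Prop := 0 < m ∧ m < κ

/-- (A2): `0 = G0 ≤ Gv ≤ Gθ = β` for all `v ∈ E_θ^+`, with `θ > 0`. -/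
def assumA2 (G : BCF d → BCF d) (κ m θ : ℝ) : Prop :=
  0 < θ ∧ G 0 = 0 ∧ (∀ x, G (BoundedContinuousFunction.const (EucSp d) θ) x = κ - m) ∧
    ∀ v : BCF d, memTube θ v → ∀ x, 0 ≤ G v x ∧ G v x ≤ κ - m

/-- (A3): `G` is Lipschitz continuous on `E_θ^+`. -/
def assumA3 (G : BCF d → BCF d) (θ : ℝ) : Prop :=
  ∃ l > (0 : ℝ), ∀ v w : BCF d, memTube θ v → memTube θ w → ‖G v - G w‖ ≤ l * ‖v - w‖

/-- (A4): quasi-monotonicity of the right-hand side of the equation. -/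
def assumA4 (a : EucSp d → ℝ) (κ : ℝ) (G : BCF d → BCF d) (θ : ℝ) : Prop :=
  ∃ p ≥ (0 : ℝ), ∀ v w : BCF d, memTube θ v → memTube θ w → (∀ x, v x ≤ w x) →
    ∀ x, κ * convol a (⇑v) x - v x * G v x + p * v x ≤
      κ * convol a (⇑w) x - w x * G w x + p * w x

/-- (A5): the kernel `a` is non-degenerate at the origin. -/
def assumA5 (a : EucSp d → ℝ) : Prop :=
  ∃ ϱ > (0 : ℝ), ∀ᵐ (x : EucSp d) ∂volume, x ∈ Metric.ball (0 : EucSp d) ϱ → ϱ ≤ a x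

/-- (A6): `G` is continuous on `E_θ^+` for locally uniform convergence. -/
def assumA6 (G : BCF d → BCF d) (θ : ℝ) : Prop :=
  ∀ (vn : ℕ → BCF d) (v : BCF d), (∀ n, memTube θ (vn n)) → memTube θ v →
    TendstoLocallyUniformly (fun n => ⇑(vn n)) (⇑v) atTop →
    TendstoLocallyUniformly (fun n => ⇑(G (vn n))) (⇑(G v)) atTop

/-- (A7): `G` commutes with all translations. -/
def assumA7 (G : BCF d → BCF d) (θ : ℝ) : Prop :=
  ∀ v : BCF d, memTube θ v → ∀ y, G (translateBCF v y) = translateBCF (G v) y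

/-- (A8): `Gr < β` for all constant functions `r ∈ (0, θ)`. -/
def assumA8 (G : BCF d → BCF d) (κ m θ : ℝ) : Prop :=
  ∀ r : ℝ, 0 < r → r < θ →
    ∀ x, G (BoundedContinuousFunction.const (EucSp d) r) x < κ - m

/-- (A9): the kernel `a` has a finite first moment. -/
def assumA9 (a : EucSp d → ℝ) : Prop := Integrable (fun y => ‖y‖ * a y)

/-- (A10): there are `q ≥ 0`, `δ > 0` and a smooth bounded `0 ≤ b` with
`a − b ≥ δ 1_{B_δ(0)}` and `w · Gw ≤ κ b∗w + q w` on `E_θ^+`. -/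
def assumA10 (a : EucSp d → ℝ) (κ : ℝ) (G : BCF d → BCF d) (θ : ℝ) : Prop :=
  ∃ q ≥ (0 : ℝ), ∃ δ > (0 : ℝ), ∃ b : EucSp d → ℝ,
    (∀ x, 0 ≤ b x) ∧ (∀ n : ℕ, ContDiff ℝ n b) ∧ (∃ C, ∀ x, b x ≤ C) ∧
    (∀ x, (Metric.ball (0 : EucSp d) δ).indicator (fun _ => δ) x ≤ a x - b x) ∧
    ∀ w : BCF d, memTube θ w → ∀ x, w x * G w x ≤ κ * convol b (⇑w) x + q * w x

/-!
Let `W = u₁ - u₂` and `g t = ‖(W t)⁺‖`. On `(0, T]` both solutions lie in `E_r^+`, where the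
truncation is the identity; comparing `H u₁` with `H (u₁ ⊔ u₂)` by quasi-monotonicity and
`H (u₁ ⊔ u₂)` with `H u₂` by the Lipschitz bound gives `W' ≤ -p W + (p + h) g` pointwise.
Hence an Euler step `W + s W'` with `p s ≤ 1` has `‖(W + s W')⁺‖ ≤ (1 + h s) g`, so the right
Dini derivative of `g` is at most `h g`. Grönwall's inequality and `g 0 = 0` give `g ≡ 0`.
-/

open Set Real

lemma truncate_eq_self {v : BCF d} {r : ℝ} (hv : memTube r v) : truncate v r = v := by
  ext x
  simp [truncate, min_eq_left (hv x).2, max_eq_right (hv x).1]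

namespace BoundedContinuousFunction

variable {α : Type*} [TopologicalSpace α]

lemma apply_le_norm_posPart (f : α →ᵇ ℝ) (x : α) : f x ≤ ‖f⁺‖ :=
  (le_posPart (f x)).trans (f⁺.apply_le_norm x)

lemma norm_posPart_add_smul_le {f f' : α →ᵇ ℝ} {p h s : ℝ}
    (hf' : ∀ x, f' x ≤ -p * f x + (p + h) * ‖f⁺‖)
    (hh : 0 ≤ h) (hs : 0 ≤ s) (hps : p * s ≤ 1) :
    ‖(f + s • f')⁺‖ ≤ (1 + h * s) * ‖f⁺‖ := by
  have hhs : 0 ≤ 1 + h * s := by positivity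
  refine (norm_le (mul_nonneg hhs (norm_nonneg _))).2 fun x => ?_
  rw [coe_posPart, Pi.posPart_apply, Real.norm_of_nonneg (posPart_nonneg _), posPart_def]
  refine sup_le ?_ (mul_nonneg hhs (norm_nonneg _))
  have hfx := f.apply_le_norm_posPart x
  calc (f + s • f') x
      = (1 - p * s) * f x + s * (f' x + p * f x) := by
        simp only [coe_add, coe_smul, Pi.add_apply, smul_eq_mul]; ring
    _ ≤ (1 - p * s) * ‖f⁺‖ + s * ((p + h) * ‖f⁺‖) := by
      gcongr
      linarith [hf' x]
    _ = (1 + h * s) * ‖f⁺‖ := by ring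

end BoundedContinuousFunction

open BoundedContinuousFunction

lemma apply_sub_apply_le_of_lipschitz_of_quasiMono {H : BCF d → BCF d} {h p r : ℝ}
    (hHlip : ∀ v w : BCF d, memTube r v → memTube r w → ‖H w - H v‖ ≤ h * ‖w - v‖)
    (hHmono : ∀ v w : BCF d, memTube r v → memTube r w → (∀ x, v x ≤ w x) →
      ∀ x, H v x + p * v x ≤ H w x + p * w x)
    (hp : 0 ≤ p) {v w : BCF d} (hv : memTube r v) (hw : memTube r w) (x : EucSp d) :
    H v x - H w x ≤ -p * (v - w) x + (p + h) * ‖(v - w)⁺‖ := by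
  have hvw : memTube r (v ⊔ w) := fun y =>
    ⟨(hv y).1.trans le_sup_left, sup_le (hv y).2 (hw y).2⟩
  have hsup : v ⊔ w - w = (v - w)⁺ := by rw [sup_eq_add_posPart_sub, add_sub_cancel_left]
  have hmono := hHmono v (v ⊔ w) hv hvw (fun y => le_sup_left) x
  have hlip : H (v ⊔ w) x - H w x ≤ h * ‖(v - w)⁺‖ :=
    (apply_le_norm (H (v ⊔ w) - H w) x).trans (hsup ▸ hHlip w (v ⊔ w) hw hvw)
  have hsup_apply : (v ⊔ w) x - w x ≤ ‖(v - w)⁺‖ := hsup ▸ apply_le_norm (v ⊔ w - w) x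
  rw [coe_sub, Pi.sub_apply]
  linarith [mul_le_mul_of_nonneg_left hsup_apply hp]

lemma eventually_slope_lt_of_hasDerivWithinAt {E : Type*} [NormedAddCommGroup E]
    [NormedSpace ℝ E] {φ : E → ℝ} {f : ℝ → E} {D : E} {τ c ρ : ℝ}
    (hφ : LipschitzWith 1 φ) (hf : HasDerivWithinAt f D (Ioi τ) τ)
    (htangent : ∀ᶠ z in 𝓝[>] τ, φ (f τ + (z - τ) • D) ≤ φ (f τ) + c * (z - τ))
    (hρ : c < ρ) :
    ∀ᶠ z in 𝓝[>] τ, (z - τ)⁻¹ * (φ (f z) - φ (f τ)) < ρ := by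
  have hε : 0 < (ρ - c) / 2 := by linarith
  filter_upwards [(hasDerivWithinAt_iff_isLittleO.1 hf).def hε, htangent,
    self_mem_nhdsWithin] with z hlin htan (hz : τ < z)
  have hzτ : 0 < z - τ := sub_pos.2 hz
  rw [Real.norm_of_nonneg hzτ.le] at hlin
  have hφz : φ (f z) ≤ φ (f τ + (z - τ) • D) + (ρ - c) / 2 * (z - τ) := by
    have := hφ.dist_le_mul (f z) (f τ + (z - τ) • D)
    rw [NNReal.coe_one, one_mul, Real.dist_eq, dist_eq_norm, sub_add_eq_sub_sub] at this
    linarith [le_abs_self (φ (f z) - φ (f τ + (z - τ) • D))]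
  rw [inv_mul_lt_iff₀ hzτ]
  nlinarith

lemma frequently_slope_norm_posPart_lt {α : Type*} [TopologicalSpace α] {W : ℝ → α →ᵇ ℝ}
    {D : α →ᵇ ℝ} {τ p h ρ : ℝ} (hW : HasDerivWithinAt W D (Ioi τ) τ)
    (hD : ∀ x, D x ≤ -p * W τ x + (p + h) * ‖(W τ)⁺‖) (hh : 0 ≤ h) (hρ : h * ‖(W τ)⁺‖ < ρ) :
    ∃ᶠ z in 𝓝[>] τ, (z - τ)⁻¹ * (‖(W z)⁺‖ - ‖(W τ)⁺‖) < ρ := by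
  have hsmall : ∀ᶠ z in 𝓝[>] τ, p * (z - τ) ≤ 1 :=
    nhdsWithin_le_nhds <| ((by fun_prop : Continuous fun z => p * (z - τ)).tendsto' τ 0
      (by simp)).eventually (eventually_le_nhds one_pos)
  have hφ : LipschitzWith 1 fun w : α →ᵇ ℝ => ‖w⁺‖ := by
    simpa [Function.comp_def] using lipschitzWith_one_norm.comp lipschitzWith_posPart
  refine (eventually_slope_lt_of_hasDerivWithinAt hφ hW ?_ hρ).frequently
  filter_upwards [hsmall, self_mem_nhdsWithin] with z hz (hτz : τ < z)
  have := norm_posPart_add_smul_le hD hh (sub_nonneg.2 hτz.le) hz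
  linarith

-- Unlike `le_gronwallBound_of_liminf_deriv_right_le`, no slope bound is needed at `a`.
lemma le_mul_exp_of_liminf_slope_right_le {g : ℝ → ℝ} {K a b : ℝ}
    (hg : ContinuousOn g (Icc a b))
    (hslope : ∀ x ∈ Ioo a b, ∀ ρ, K * g x < ρ →
      ∃ᶠ z in 𝓝[>] x, (z - x)⁻¹ * (g z - g x) < ρ) :
    ∀ t ∈ Icc a b, g t ≤ g a * exp (K * (t - a)) := by
  rintro t ⟨hat, htb⟩
  rcases hat.eq_or_lt with rfl | hat
  · simp
  have hshift : ∀ a' ∈ Ioc a t, g t ≤ g a' * exp (K * (t - a')) := fun a' ha' => by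
    have := le_gronwallBound_of_liminf_deriv_right_le (hg.mono (Icc_subset_Icc_left ha'.1.le))
      (fun x hx => hslope x ⟨ha'.1.trans_le hx.1, hx.2⟩) le_rfl (fun _ _ => by rw [add_zero])
      t ⟨ha'.2, htb⟩
    rwa [gronwallBound_ε0] at this
  have hlim : Tendsto (fun a' => g a' * exp (K * (t - a'))) (𝓝[>] a)
      (𝓝 (g a * exp (K * (t - a)))) := by
    refine ((hg a ⟨le_rfl, hat.le.trans htb⟩).mono_of_mem_nhdsWithin ?_).tendsto.mul
      (by fun_prop : Continuous fun a' => exp (K * (t - a'))).continuousWithinAt.tendsto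
    exact Icc_mem_nhdsGT (hat.trans_le htb)
  exact ge_of_tendsto hlim (eventually_of_mem (Ioc_mem_nhdsGT hat) hshift)

theorem statement4_general (d : ℕ)
    (H : BCF d → BCF d) (h p r T : ℝ)
    (hh : 0 < h) (hp : 0 < p)
    (hHlip : ∀ v w : BCF d, memTube r v → memTube r w → ‖H w - H v‖ ≤ h * ‖w - v‖)
    (hHmono : ∀ v w : BCF d, memTube r v → memTube r w → (∀ x, v x ≤ w x) →
      ∀ x, H v x + p * v x ≤ H w x + p * w x)
    (u₁ u₂ u₁' u₂' : ℝ → BCF d)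
    (hY1 : MemY T u₁ u₁') (hY2 : MemY T u₂ u₂')
    (hb1 : ∀ t ∈ Set.Ioc (0 : ℝ) T, ∀ x, 0 ≤ u₁ t x ∧ u₁ t x ≤ r)
    (hb2 : ∀ t ∈ Set.Ioc (0 : ℝ) T, ∀ x, 0 ≤ u₂ t x ∧ u₂ t x ≤ r)
    (hF : ∀ t ∈ Set.Ioc (0 : ℝ) T, ∀ x,
      u₁' t x - H (truncate (u₁ t) r) x ≤ u₂' t x - H (truncate (u₂ t) r) x)
    (hinit : ∀ x, u₁ 0 x ≤ u₂ 0 x) :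
    ∀ t ∈ Set.Icc (0 : ℝ) T, ∀ x, u₁ t x ≤ u₂ t x := by
  obtain ⟨hc₁, -, hd₁⟩ := hY1
  obtain ⟨hc₂, -, hd₂⟩ := hY2
  set W : ℝ → BCF d := fun t => u₁ t - u₂ t
  set g : ℝ → ℝ := fun t => ‖(W t)⁺‖
  have hW' : ∀ t ∈ Ioc 0 T, ∀ x, (u₁' t - u₂' t) x ≤ -p * W t x + (p + h) * g t := by
    intro t ht x
    have hFt := hF t ht x
    rw [truncate_eq_self (hb1 t ht), truncate_eq_self (hb2 t ht)] at hFt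
    have hH :=
      apply_sub_apply_le_of_lipschitz_of_quasiMono hHlip hHmono hp.le (hb1 t ht) (hb2 t ht) x
    rw [coe_sub, Pi.sub_apply]
    linarith
  have hg0 : g 0 = 0 := by
    simp only [g, norm_eq_zero, posPart_eq_zero]
    exact fun x => sub_nonpos.2 (hinit x)
  have hgcont : ContinuousOn g (Icc 0 T) :=
    (continuous_norm.comp continuous_posPart).comp_continuousOn (hc₁.sub hc₂)
  have hslope : ∀ τ ∈ Ioo 0 T, ∀ ρ, h * g τ < ρ →
      ∃ᶠ z in 𝓝[>] τ, (z - τ)⁻¹ * (g z - g τ) < ρ := by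
    intro τ hτ ρ hρ
    have hτ' : τ ∈ Ioc 0 T := Ioo_subset_Ioc_self hτ
    have hderiv : HasDerivWithinAt W (u₁' τ - u₂' τ) (Ioi τ) τ :=
      ((hd₁ τ hτ').sub (hd₂ τ hτ')).mono_of_mem_nhdsWithin (Ioc_mem_nhdsGT_of_mem ⟨hτ.1.le, hτ.2⟩)
    exact frequently_slope_norm_posPart_lt hderiv (hW' τ hτ') hh.le hρ
  intro t ht x
  have hgt := le_mul_exp_of_liminf_slope_right_le hgcont hslope t ht
  rw [hg0, zero_mul] at hgt
  have hWt := (W t).apply_le_norm_posPart x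
  rw [coe_sub, Pi.sub_apply] at hWt
  linarith

/-- Abstract comparison principle (Theorem `compar_pr`). -/
theorem statement4 (d : ℕ) (hd : 1 ≤ d)
    (H : BCF d → BCF d) (h p r T : ℝ)
    (hh : 0 < h) (hp : 0 < p) (hr : 0 < r) (hT : 0 < T)
    (hHlip : ∀ v w : BCF d, memTube r v → memTube r w → ‖H w - H v‖ ≤ h * ‖w - v‖)
    (hHmono : ∀ v w : BCF d, memTube r v → memTube r w → (∀ x, v x ≤ w x) →
      ∀ x, H v x + p * v x ≤ H w x + p * w x)
    (u₁ u₂ u₁' u₂' : ℝ → BCF d)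
    (hY1 : MemY T u₁ u₁') (hY2 : MemY T u₂ u₂')
    (hb1 : ∀ t ∈ Set.Ioc (0 : ℝ) T, ∀ x, 0 ≤ u₁ t x ∧ u₁ t x ≤ r)
    (hb2 : ∀ t ∈ Set.Ioc (0 : ℝ) T, ∀ x, 0 ≤ u₂ t x ∧ u₂ t x ≤ r)
    (hF : ∀ t ∈ Set.Ioc (0 : ℝ) T, ∀ x,
      u₁' t x - H (truncate (u₁ t) r) x ≤ u₂' t x - H (truncate (u₂ t) r) x)
    (hinit : ∀ x, u₁ 0 x ≤ u₂ 0 x) :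
    ∀ t ∈ Set.Icc (0 : ℝ) T, ∀ x, u₁ t x ≤ u₂ t x :=
  statement4_general d H h p r T hh hp hHlip hHmono u₁ u₂ u₁' u₂' hY1 hY2 hb1 hb2 hF hinit

end
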